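/- The projection Π_Q is a contraction for the completely bounded norm of homogeneous forms: for a homogeneous p and family Q of disjoint subsets, ‖Π_Q p‖_cb ≤ ‖p‖_cb. -/

import Mathlib

open MvPolynomial

noncomputable section

/-- `d × d` real matrices, viewed as operators on Euclidean space (with operator norm). -/
abbrev Mat (d : ℕ) := EuclideanSpace ℝ (Fin d) →L[ℝ] EuclideanSpace ℝ (Fin d)

/-- Evaluation of a `t`-tensor as a degree-`t` form: `T(x) = ∑_i T_i x_{i₁}⋯x_{i_t}`. -/
def tEval {n t : ℕ} (T : (Fin t → Fin n) → ℝ) (x : Fin n → ℝ) : ℝ :=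
  ∑ i : Fin t → Fin n, T i * ∏ s, x (i s)

/-- The completely bounded norm of a `t`-tensor (single contraction-valued map). -/
def cbNormT {n t : ℕ} (T : (Fin t → Fin n) → ℝ) : ℝ :=
  sSup {c : ℝ | ∃ (d : ℕ) (A : Fin n → Mat d),
    (∀ j, ‖A j‖ ≤ 1) ∧
    c = ‖∑ i : Fin t → Fin n, T i • (List.ofFn fun s => A (i s)).prod‖}

/-- The completely bounded norm of a degree-`t` form:
`‖p‖_cb = inf { ‖T‖_cb : T(x) = p(x) ∀ x }`. -/
def polyCb (n t : ℕ) (p : MvPolynomial (Fin n) ℝ) : ℝ :=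
  sInf {c : ℝ | ∃ T : (Fin t → Fin n) → ℝ,
    (∀ x : Fin n → ℝ, tEval T x = eval x p) ∧ c = cbNormT T}

/-- The projection `Π_Q` onto the span of monomials `x^α` with `∑_{i ∈ I} α_i` odd
for every `I ∈ Q`. -/
def parityProj {n : ℕ} (Q : Finset (Finset (Fin n))) (p : MvPolynomial (Fin n) ℝ) :
    MvPolynomial (Fin n) ℝ :=
  ∑ α ∈ p.support,
    if ∀ I ∈ Q, Odd (∑ i ∈ I, α i) then monomial α (p.coeff α) else 0

/-!
For a sign vector `z ∈ {±1}^Q` put `z_j = ∏_{I ∋ j} z_I`. The substitution `x_j ↦ z_j x_j`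
multiplies `x^α` by `∏_I z_I ^ (∑_{j ∈ I} α_j)`, so averaging `p(z·x) ∏_I z_I` over `z` keeps
exactly the monomials whose sums `∑_{j ∈ I} α_j` are all odd, i.e. it computes `Π_Q p`. The same
average applied to a tensor `T` representing `p` yields the tensor `Π_Q T`, which represents
`Π_Q p`; at matrix level it writes `(Π_Q T)(A)` as an average of `± T(A·z)`, and since the
`z_j A_j` are again contractions, `‖(Π_Q T)(A)‖ ≤ ‖T‖_cb`.
-/

open Finset

lemma List.prod_ofFn_smul {𝕜 A : Type*} [CommSemiring 𝕜] [Semiring A] [Algebra 𝕜 A]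
    {t : ℕ} (c : Fin t → 𝕜) (a : Fin t → A) :
    (List.ofFn fun s => c s • a s).prod = (∏ s, c s) • (List.ofFn a).prod := by
  induction t with
  | zero => simp
  | succ t ih =>
    rw [List.ofFn_succ, List.ofFn_succ, List.prod_cons, List.prod_cons, ih, Fin.prod_univ_succ,
      smul_mul_smul_comm]

lemma ContinuousLinearMap.norm_list_prod_le_one {𝕜 E : Type*} [NontriviallyNormedField 𝕜]
    [SeminormedAddCommGroup E] [NormedSpace 𝕜 E] (l : List (E →L[𝕜] E)) (h : ∀ a ∈ l, ‖a‖ ≤ 1) :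
    ‖l.prod‖ ≤ 1 := by
  induction l with
  | nil => exact norm_id_le
  | cons a l ih =>
    rw [List.prod_cons]
    exact (norm_mul_le _ _).trans <| mul_le_one₀ (h a List.mem_cons_self) (norm_nonneg _)
      (ih fun b hb => h b (List.mem_cons_of_mem a hb))

namespace ParityProj

section Signs

variable {ι : Type*} [DecidableEq ι]

/-- `S ⊆ Q` encodes the sign vector `z ∈ {±1}^Q` with `z_I = -1` iff `I ∈ S`; then
`flipWeight Q S j = z_j`. -/
def flipSign (S : Finset (Finset ι)) (I : Finset ι) : ℝ :=
  if I ∈ S then -1 else 1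

def flipWeight (Q S : Finset (Finset ι)) (j : ι) : ℝ :=
  ∏ I ∈ Q with j ∈ I, flipSign S I

lemma abs_flipSign (S : Finset (Finset ι)) (I : Finset ι) : |flipSign S I| = 1 := by
  unfold flipSign; split_ifs <;> simp

lemma abs_flipWeight (Q S : Finset (Finset ι)) (j : ι) : |flipWeight Q S j| = 1 := by
  rw [flipWeight, abs_prod]
  exact prod_eq_one fun I _ => abs_flipSign S I

lemma prod_flipWeight_pow {σ : Type*} [Fintype σ] (Q S : Finset (Finset ι)) (f : σ → ι)
    (g : σ → ℕ) :
    ∏ s, flipWeight Q S (f s) ^ g s = ∏ I ∈ Q, flipSign S I ^ ∑ s with f s ∈ I, g s := by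
  simp_rw [flipWeight, ← prod_pow, ← prod_pow_eq_pow_sum]
  exact prod_comm' fun s I => by simp [and_comm]

lemma prod_flipWeight_comp {σ : Type*} [Fintype σ] (Q S : Finset (Finset ι)) (f : σ → ι) :
    ∏ s, flipWeight Q S (f s) = ∏ I ∈ Q, flipSign S I ^ #{s | f s ∈ I} := by
  simpa only [pow_one, ← card_eq_sum_ones] using prod_flipWeight_pow Q S f fun _ => 1

lemma sum_powerset_prod_flipSign_pow (Q : Finset (Finset ι)) (m : Finset ι → ℕ) :
    ∑ S ∈ Q.powerset, ∏ I ∈ Q, flipSign S I ^ (m I + 1)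
      = if ∀ I ∈ Q, Odd (m I) then 2 ^ #Q else 0 := by
  have split_prod : ∀ S ∈ Q.powerset, ∏ I ∈ Q, flipSign S I ^ (m I + 1)
      = (∏ I ∈ S, (-1 : ℝ) ^ (m I + 1)) * ∏ I ∈ Q \ S, 1 := by
    intro S hS
    rw [← prod_sdiff (mem_powerset.1 hS), mul_comm]
    congr 1
    · exact prod_congr rfl fun I hI => by rw [flipSign, if_pos hI]
    · exact prod_congr rfl fun I hI => by rw [flipSign, if_neg (mem_sdiff.1 hI).2, one_pow]
  have factor : ∀ I, (-1 : ℝ) ^ (m I + 1) + 1 = if Odd (m I) then 2 else 0 := by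
    intro I
    split_ifs with h
    · rw [Even.neg_one_pow h.add_one]; norm_num
    · rw [Odd.neg_one_pow (Nat.odd_add_one.2 h)]; norm_num
  rw [sum_congr rfl split_prod, ← prod_add, prod_congr rfl fun I _ => factor I, prod_ite_zero,
    prod_const]

lemma sum_powerset_smul_sum_flipSign_pow {κ M : Type*} [AddCommGroup M] [Module ℝ M]
    (Q : Finset (Finset ι)) (s : Finset κ) (m : κ → Finset ι → ℕ) (v : κ → M) :
    ∑ S ∈ Q.powerset,
        (∏ I ∈ Q, flipSign S I) • ∑ k ∈ s, (∏ I ∈ Q, flipSign S I ^ m k I) • v k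
      = (2 : ℝ) ^ #Q • ∑ k ∈ s with ∀ I ∈ Q, Odd (m k I), v k := by
  simp_rw [smul_sum, smul_smul, ← prod_mul_distrib, ← pow_succ']
  rw [sum_comm]
  simp_rw [← sum_smul, sum_powerset_prod_flipSign_pow, ite_smul, zero_smul, sum_ite,
    sum_const_zero, add_zero]

end Signs

section Tensor

variable {n t : ℕ}

def tensorEval {A : Type*} [Ring A] [Algebra ℝ A] (T : (Fin t → Fin n) → ℝ) (a : Fin n → A) :
    A :=
  ∑ i, T i • (List.ofFn fun s => a (i s)).prod

def parityProjTensor (Q : Finset (Finset (Fin n))) (T : (Fin t → Fin n) → ℝ) :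
    (Fin t → Fin n) → ℝ :=
  fun i => if ∀ I ∈ Q, Odd #{s | i s ∈ I} then T i else 0

lemma tEval_eq_tensorEval (T : (Fin t → Fin n) → ℝ) (x : Fin n → ℝ) :
    tEval T x = tensorEval T x := by
  simp only [tEval, tensorEval, List.prod_ofFn, smul_eq_mul]

/-- The matrix-level averaging identity `Π_Q T(A) = 𝔼_z [T(A·z) ∏_{I ∈ Q} z_I]`. -/
lemma two_pow_smul_tensorEval_parityProjTensor {A : Type*} [Ring A] [Algebra ℝ A]
    (Q : Finset (Finset (Fin n))) (T : (Fin t → Fin n) → ℝ) (a : Fin n → A) :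
    (2 : ℝ) ^ #Q • tensorEval (parityProjTensor Q T) a
      = ∑ S ∈ Q.powerset,
          (∏ I ∈ Q, flipSign S I) • tensorEval T (fun j => flipWeight Q S j • a j) := by
  have expand : ∀ S : Finset (Finset (Fin n)), tensorEval T (fun j => flipWeight Q S j • a j)
      = ∑ i, (∏ I ∈ Q, flipSign S I ^ #{s | i s ∈ I}) •
          T i • (List.ofFn fun s => a (i s)).prod := by
    intro S
    refine sum_congr rfl fun i _ => ?_
    rw [List.prod_ofFn_smul, prod_flipWeight_comp, smul_comm]
  simp_rw [expand, sum_powerset_smul_sum_flipSign_pow, tensorEval, parityProjTensor, ite_smul,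
    zero_smul, sum_ite, sum_const_zero, add_zero]
  -- the two sides differ only in the `Decidable` instance of the filter
  congr

lemma two_pow_mul_eval_parityProj (Q : Finset (Finset (Fin n))) (p : MvPolynomial (Fin n) ℝ)
    (x : Fin n → ℝ) :
    2 ^ #Q * eval x (parityProj Q p)
      = ∑ S ∈ Q.powerset, (∏ I ∈ Q, flipSign S I) * eval (fun j => flipWeight Q S j * x j) p := by
  have expand : ∀ S : Finset (Finset (Fin n)), eval (fun j => flipWeight Q S j * x j) p
      = ∑ α ∈ p.support,
          (∏ I ∈ Q, flipSign S I ^ ∑ j ∈ I, α j) • (coeff α p * ∏ j, x j ^ α j) := by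
    intro S
    rw [eval_eq']
    refine sum_congr rfl fun α _ => ?_
    have weights : ∏ j, flipWeight Q S j ^ α j = ∏ I ∈ Q, flipSign S I ^ ∑ j ∈ I, α j := by
      simpa only [id, filter_univ_mem] using prod_flipWeight_pow Q S id α
    simp_rw [mul_pow, prod_mul_distrib, weights, smul_eq_mul]
    ring
  simp_rw [expand, ← smul_eq_mul, sum_powerset_smul_sum_flipSign_pow, parityProj, map_sum,
    apply_ite (eval x), eval_monomial, Finsupp.prod_pow, map_zero, sum_ite, sum_const_zero,
    add_zero, smul_eq_mul]
  congr

lemma tEval_parityProjTensor {Q : Finset (Finset (Fin n))} {T : (Fin t → Fin n) → ℝ}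
    {p : MvPolynomial (Fin n) ℝ} (hT : ∀ x, tEval T x = eval x p) (x : Fin n → ℝ) :
    tEval (parityProjTensor Q T) x = eval x (parityProj Q p) := by
  refine mul_left_cancel₀ (pow_ne_zero #Q two_ne_zero) ?_
  calc 2 ^ #Q * tEval (parityProjTensor Q T) x
      = (2 : ℝ) ^ #Q • tensorEval (parityProjTensor Q T) x := by
        rw [tEval_eq_tensorEval, smul_eq_mul]
    _ = ∑ S ∈ Q.powerset,
          (∏ I ∈ Q, flipSign S I) • tensorEval T (fun j => flipWeight Q S j • x j) :=
        two_pow_smul_tensorEval_parityProjTensor Q T x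
    _ = 2 ^ #Q * eval x (parityProj Q p) := by
        rw [two_pow_mul_eval_parityProj]
        simp_rw [← tEval_eq_tensorEval, hT, smul_eq_mul]

end Tensor

section CbNorm

variable {n t : ℕ}

lemma norm_tensorEval_le {d : ℕ} (T : (Fin t → Fin n) → ℝ) {A : Fin n → Mat d}
    (hA : ∀ j, ‖A j‖ ≤ 1) : ‖tensorEval T A‖ ≤ ∑ i, |T i| := by
  refine (norm_sum_le _ _).trans (sum_le_sum fun i _ => ?_)
  rw [norm_smul, Real.norm_eq_abs]
  refine mul_le_of_le_one_right (abs_nonneg _)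
    (ContinuousLinearMap.norm_list_prod_le_one _ fun a ha => ?_)
  obtain ⟨s, rfl⟩ := List.mem_ofFn.1 ha
  exact hA (i s)

lemma norm_tensorEval_le_cbNormT {d : ℕ} (T : (Fin t → Fin n) → ℝ) {A : Fin n → Mat d}
    (hA : ∀ j, ‖A j‖ ≤ 1) : ‖tensorEval T A‖ ≤ cbNormT T :=
  le_csSup ⟨∑ i, |T i|, by rintro _ ⟨d, A, hA, rfl⟩; exact norm_tensorEval_le T hA⟩
    ⟨d, A, hA, rfl⟩

lemma cbNormT_nonneg (T : (Fin t → Fin n) → ℝ) : 0 ≤ cbNormT T :=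
  (norm_nonneg _).trans <|
    norm_tensorEval_le_cbNormT T (A := fun _ => (0 : Mat 0)) fun _ => by simp

lemma norm_tensorEval_parityProjTensor_le {d : ℕ} (Q : Finset (Finset (Fin n)))
    (T : (Fin t → Fin n) → ℝ) {A : Fin n → Mat d} (hA : ∀ j, ‖A j‖ ≤ 1) :
    ‖tensorEval (parityProjTensor Q T) A‖ ≤ cbNormT T := by
  have two_pow_pos : (0 : ℝ) < 2 ^ #Q := by positivity
  refine le_of_mul_le_mul_left ?_ two_pow_pos
  calc 2 ^ #Q * ‖tensorEval (parityProjTensor Q T) A‖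
      = ‖(2 : ℝ) ^ #Q • tensorEval (parityProjTensor Q T) A‖ := by
        rw [norm_smul, Real.norm_of_nonneg two_pow_pos.le]
    _ = ‖∑ S ∈ Q.powerset,
          (∏ I ∈ Q, flipSign S I) • tensorEval T (fun j => flipWeight Q S j • A j)‖ := by
        rw [two_pow_smul_tensorEval_parityProjTensor]
    _ ≤ ∑ S ∈ Q.powerset,
          ‖(∏ I ∈ Q, flipSign S I) • tensorEval T (fun j => flipWeight Q S j • A j)‖ :=
        norm_sum_le _ _
    _ ≤ ∑ _S ∈ Q.powerset, cbNormT T := by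
        refine sum_le_sum fun S _ => ?_
        rw [norm_smul, Real.norm_eq_abs, abs_prod, prod_congr rfl fun I _ => abs_flipSign S I,
          prod_const_one, one_mul]
        refine norm_tensorEval_le_cbNormT T fun j => ?_
        rw [norm_smul, Real.norm_eq_abs, abs_flipWeight, one_mul]
        exact hA j
    _ = 2 ^ #Q * cbNormT T := by
        rw [sum_const, card_powerset, nsmul_eq_mul, Nat.cast_pow, Nat.cast_ofNat]

lemma cbNormT_parityProjTensor_le (Q : Finset (Finset (Fin n))) (T : (Fin t → Fin n) → ℝ) :
    cbNormT (parityProjTensor Q T) ≤ cbNormT T :=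
  Real.sSup_le (by rintro _ ⟨d, A, hA, rfl⟩; exact norm_tensorEval_parityProjTensor_le Q T hA)
    (cbNormT_nonneg T)

lemma polyCb_le_cbNormT {p : MvPolynomial (Fin n) ℝ} {T : (Fin t → Fin n) → ℝ}
    (hT : ∀ x, tEval T x = eval x p) : polyCb n t p ≤ cbNormT T :=
  csInf_le ⟨0, by rintro _ ⟨T', _, rfl⟩; exact cbNormT_nonneg T'⟩ ⟨T, hT, rfl⟩

end CbNorm

section Representation

lemma exists_tuple_prod_eq_prod_pow {σ R : Type*} [Fintype σ] [CommMonoid R] {t : ℕ}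
    (α : σ →₀ ℕ) (hα : α.degree = t) :
    ∃ i : Fin t → σ, ∀ x : σ → R, ∏ s, x (i s) = ∏ j, x j ^ α j := by
  have hlen : α.toMultiset.toList.length = t := by
    rw [Multiset.length_toList, Finsupp.card_toMultiset, ← hα]
    rfl
  subst hlen
  refine ⟨fun s => α.toMultiset.toList[s.1], fun x => ?_⟩
  rw [Fin.prod_univ_fun_getElem, ← Multiset.prod_coe, ← Multiset.map_coe, Multiset.coe_toList,
    Finsupp.toMultiset_map, Finsupp.prod_toMultiset,
    Finsupp.prod_mapDomain_index pow_zero pow_add, Finsupp.prod_pow]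

lemma exists_tEval_eq {n t : ℕ} {p : MvPolynomial (Fin n) ℝ} (hp : p.IsHomogeneous t) :
    ∃ T : (Fin t → Fin n) → ℝ, ∀ x, tEval T x = eval x p := by
  have tuples : ∀ α ∈ p.support, ∃ i : Fin t → Fin n, ∀ x : Fin n → ℝ,
      ∏ s, x (i s) = ∏ j, x j ^ α j := fun α hα =>
    exists_tuple_prod_eq_prod_pow α <|
      by_contra fun h => mem_support_iff.1 hα (hp.coeff_eq_zero h)
  choose i hi using tuples
  refine ⟨fun k => ∑ α ∈ p.support.attach, if k = i α α.2 then coeff α p else 0, fun x => ?_⟩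
  rw [tEval, eval_eq']
  simp_rw [sum_mul, ite_mul, zero_mul]
  rw [sum_comm]
  simp_rw [sum_ite_eq' univ, if_pos (mem_univ _), hi]
  exact sum_attach p.support fun α => coeff α p * ∏ j, x j ^ α j

end Representation

end ParityProj

theorem parityProj_cb_le_general (n t : ℕ) (Q : Finset (Finset (Fin n)))
    (p : MvPolynomial (Fin n) ℝ) (hp : p.IsHomogeneous t) :
    polyCb n t (parityProj Q p) ≤ polyCb n t p := by
  obtain ⟨T₀, hT₀⟩ := ParityProj.exists_tEval_eq hp
  refine le_csInf ⟨_, T₀, hT₀, rfl⟩ ?_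
  rintro _ ⟨T, hT, rfl⟩
  calc polyCb n t (parityProj Q p)
      ≤ cbNormT (ParityProj.parityProjTensor Q T) :=
        ParityProj.polyCb_le_cbNormT (ParityProj.tEval_parityProjTensor hT)
    _ ≤ cbNormT T := ParityProj.cbNormT_parityProjTensor_le Q T

/-- The parity projection `Π_Q` is a contraction for the completely bounded norm of
homogeneous forms: `‖Π_Q p‖_cb ≤ ‖p‖_cb`. -/
theorem parityProj_cb_le (n t : ℕ) (Q : Finset (Finset (Fin n)))
    (hQ : (Q : Set (Finset (Fin n))).Pairwise Disjoint)
    (p : MvPolynomial (Fin n) ℝ) (hp : p.IsHomogeneous t) :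
    polyCb n t (parityProj Q p) ≤ polyCb n t p :=
  parityProj_cb_le_general n t Q p hp
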